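/- arXiv:1810.11746 — 9 statements merged into one kernel-verified Lean document; each statement's English description precedes it below -/
import Mathlib

section
/- Let n ≥ 1 be an integer, r > 0, and ξ_1,…,ξ_n ≥ 0 with Σ_{i=1}^n ξ_i < 1. Then there exist γ_1,…,γ_n > 0 and ρ ∈ (0,1) such that for all z = (z_1,…,z_n) ∈ ℝ^n: γ_1·Σ_{i=1}^n ξ_i|z_i|^r + Σ_{i=2}^n γ_i|z_{i−1}|^r ≤ ρ·Σ_{i=1}^n γ_i|z_i|^r. -/
/-- Weight-selection lemma (Lemma 1, Lee 2006): given nonnegative `ξ₁,…,ξₙ` with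
`∑ ξᵢ < 1` and `r > 0`, one can choose positive weights `γ₁,…,γₙ` and `ρ ∈ (0,1)`
such that `γ₁ ∑ᵢ ξᵢ|zᵢ|^r + ∑_{i=2}^n γᵢ|z_{i-1}|^r ≤ ρ ∑ᵢ γᵢ|zᵢ|^r` for all `z ∈ ℝⁿ`. -/
theorem weight_selection_lemma (n : ℕ) (hn : 1 ≤ n) (r : ℝ) (hr : 0 < r)
    (ξ : ℕ → ℝ) (hξ : ∀ i ∈ Finset.Icc 1 n, 0 ≤ ξ i)
    (hsum : ∑ i ∈ Finset.Icc 1 n, ξ i < 1) :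
    ∃ γ : ℕ → ℝ, (∀ i ∈ Finset.Icc 1 n, 0 < γ i) ∧
      ∃ ρ : ℝ, ρ ∈ Set.Ioo (0 : ℝ) 1 ∧
        ∀ z : ℕ → ℝ,
          γ 1 * (∑ i ∈ Finset.Icc 1 n, ξ i * |z i| ^ r)
            + ∑ i ∈ Finset.Icc 2 n, γ i * |z (i - 1)| ^ r
          ≤ ρ * ∑ i ∈ Finset.Icc 1 n, γ i * |z i| ^ r := by
  set S := ∑ i ∈ Finset.Icc 1 n, ξ i with hS
  have hS0 : 0 ≤ S := Finset.sum_nonneg hξ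
  set t : ℝ := (S + 1) / 2 with ht
  have ht0 : 0 < t := by rw [ht]; linarith
  have ht1 : t < 1 := by rw [ht]; linarith
  have htS : S < t := by rw [ht]; linarith
  have hn0 : (n : ℝ) ≠ 0 := by positivity
  set ρ : ℝ := t ^ ((n : ℝ)⁻¹) with hρdef
  have hρ0 : 0 < ρ := Real.rpow_pos_of_pos ht0 _
  have hρ1 : ρ < 1 := Real.rpow_lt_one ht0.le ht1 (by positivity)
  have hρn : ρ ^ n = t := by
    rw [hρdef, ← Real.rpow_natCast (t ^ ((n : ℝ)⁻¹)) n, ← Real.rpow_mul ht0.le,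
      inv_mul_cancel₀ hn0, Real.rpow_one]
  set γ : ℕ → ℝ := fun i => ρ ^ (i - 1) - ∑ j ∈ Finset.Icc 1 (i - 1), ρ ^ (i - 1 - j) * ξ j
    with hγ
  have hγ1 : γ 1 = 1 := by simp [hγ]
  -- recurrence
  have hrec : ∀ i, 1 ≤ i → ρ * γ i = ξ i + γ (i + 1) := by
    intro i hi
    obtain ⟨m, rfl⟩ := Nat.exists_eq_add_of_le hi
    simp only [hγ, Nat.add_sub_cancel, Nat.add_sub_cancel_left]
    rw [Nat.add_comm 1 m]
    have hsplit : ∑ j ∈ Finset.Icc 1 (m + 1), ρ ^ (m + 1 - j) * ξ j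
        = ∑ j ∈ Finset.Icc 1 m, ρ ^ (m + 1 - j) * ξ j + ρ ^ 0 * ξ (m + 1) := by
      have := Finset.sum_Icc_succ_top (a := 1) (b := m)
        (f := fun j => ρ ^ (m + 1 - j) * ξ j) (by omega)
      simpa using this
    have hcongr : ∑ j ∈ Finset.Icc 1 m, ρ ^ (m + 1 - j) * ξ j
        = ρ * ∑ j ∈ Finset.Icc 1 m, ρ ^ (m - j) * ξ j := by
      rw [Finset.mul_sum]
      refine Finset.sum_congr rfl fun j hj => ?_
      have hj' : j ≤ m := (Finset.mem_Icc.mp hj).2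
      have : m + 1 - j = (m - j) + 1 := by omega
      rw [this, pow_succ]; ring
    rw [hsplit, hcongr, pow_succ]
    ring
  -- positivity
  have hpos : ∀ i, i ≤ n + 1 → 0 < γ i := by
    intro i hi
    have hsub : Finset.Icc 1 (i - 1) ⊆ Finset.Icc 1 n := by
      apply Finset.Icc_subset_Icc le_rfl; omega
    have h1 : ∑ j ∈ Finset.Icc 1 (i - 1), ρ ^ (i - 1 - j) * ξ j
        ≤ ∑ j ∈ Finset.Icc 1 (i - 1), ξ j := by
      refine Finset.sum_le_sum fun j hj => ?_
      have hξj : 0 ≤ ξ j := hξ j (hsub hj)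
      have : ρ ^ (i - 1 - j) ≤ 1 := pow_le_one₀ hρ0.le hρ1.le
      nlinarith
    have h2 : ∑ j ∈ Finset.Icc 1 (i - 1), ξ j ≤ S :=
      Finset.sum_le_sum_of_subset_of_nonneg hsub (fun j hj _ => hξ j hj)
    have h3 : ρ ^ n ≤ ρ ^ (i - 1) :=
      pow_le_pow_of_le_one hρ0.le hρ1.le (by omega)
    have : t ≤ ρ ^ (i - 1) := hρn ▸ h3
    simp only [hγ]
    linarith
  refine ⟨γ, fun i hi => hpos i (by simp at hi; omega), ρ, ⟨hρ0, hρ1⟩, fun z => ?_⟩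
  have habs : ∀ i, (0 : ℝ) ≤ |z i| ^ r := fun i => Real.rpow_nonneg (abs_nonneg _) r
  -- rewrite RHS
  have hRHS : ρ * ∑ i ∈ Finset.Icc 1 n, γ i * |z i| ^ r
      = ∑ i ∈ Finset.Icc 1 n, ξ i * |z i| ^ r
        + ∑ i ∈ Finset.Icc 1 n, γ (i + 1) * |z i| ^ r := by
    rw [Finset.mul_sum, ← Finset.sum_add_distrib]
    refine Finset.sum_congr rfl fun i hi => ?_
    have hi1 : 1 ≤ i := (Finset.mem_Icc.mp hi).1
    have := hrec i hi1
    calc ρ * (γ i * |z i| ^ r) = (ρ * γ i) * |z i| ^ r := by ring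
      _ = (ξ i + γ (i + 1)) * |z i| ^ r := by rw [this]
      _ = ξ i * |z i| ^ r + γ (i + 1) * |z i| ^ r := by ring
  -- rewrite shifted sum
  have hshift : ∑ i ∈ Finset.Icc 2 n, γ i * |z (i - 1)| ^ r
      = ∑ i ∈ Finset.Icc 1 (n - 1), γ (i + 1) * |z i| ^ r := by
    have hIcc : Finset.Icc 2 n = (Finset.Icc 1 (n - 1)).map (addLeftEmbedding 1) := by
      rw [Finset.map_add_left_Icc]
      congr 1; omega
    rw [hIcc, Finset.sum_map]
    refine Finset.sum_congr rfl fun i hi => ?_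
    have : addLeftEmbedding 1 i = 1 + i := rfl
    rw [this]
    have e1 : 1 + i = i + 1 := by omega
    have e2 : 1 + i - 1 = i := by omega
    rw [e1, Nat.add_sub_cancel]
  have hmono : ∑ i ∈ Finset.Icc 1 (n - 1), γ (i + 1) * |z i| ^ r
      ≤ ∑ i ∈ Finset.Icc 1 n, γ (i + 1) * |z i| ^ r := by
    refine Finset.sum_le_sum_of_subset_of_nonneg
      (Finset.Icc_subset_Icc le_rfl (by omega)) (fun i hi _ => ?_)
    have hγpos := hpos (i + 1) (by have := Finset.mem_Icc.mp hi; omega)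
    exact mul_nonneg hγpos.le (habs i)
  rw [hγ1, one_mul, hRHS, hshift]
  linarith
end

section
/- Let μ be a probability measure on ℝ and r ∈ (0,1] with m_r = ∫|x|^r dμ(x) < ∞. If Σ_{j=1}^p (b_j^r + a_j^{r/2}·m_r) < 1, then there exist weights γ ∈ (0,∞)^p, ρ ∈ (0,1) and C ≥ 0 such that for every y ∈ ℝ^p and each i ∈ {1,2}: ∫ V_{γ,r}(N_i(y,x)) dμ(x) ≤ ρ·V_{γ,r}(y) + C. -/
/-!
Since `t ↦ |t| ^ r` is subadditive for `0 < r ≤ 1`, the first coordinate of `N_i(y, x)` satisfies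
`|N_i(y,x)₁|^r ≤ |φ_{i0}|^r + ∑ⱼ |φ_{ij}|^r |yⱼ|^r + |x|^r (α_{i0}^{r/2} + ∑ⱼ α_{ij}^{r/2} |yⱼ|^r)`.
Integrating in `x`, the shift structure of `N_i` gives
`∫ V_w(N_i(y,x)) dμ ≤ 1 + w₀ K_i + ∑ⱼ (w₀ cⱼ + w_{j+1}) |yⱼ|^r` with
`K_i = |φ_{i0}|^r + α_{i0}^{r/2} m_r` and `cⱼ = bⱼ^r + aⱼ^{r/2} m_r` (weights indexed from `0`;
`w_p ≥ 0` absorbs the coordinate pushed out by the shift).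
So it suffices to have `w₀ cⱼ + w_{j+1} ≤ ρ wⱼ`: take `ρ < 1` with `∑ⱼ cⱼ < ρ^p`, `w₀ = 1` and
`w_{j+1} = ρ wⱼ - cⱼ`, i.e. `wⱼ = ρ^j (1 - ∑_{k<j} c_k / ρ^{k+1})`, which stays positive up to
`j = p` because `∑_{k<p} c_k / ρ^{k+1} ≤ ρ^{-p} ∑ c_k < 1`.
-/

open MeasureTheory

/-- The next lag-vector of the BDAR recursion: first coordinate
`φ₀ + ∑ⱼ φⱼ yⱼ + x √(α₀ + ∑ⱼ αⱼ yⱼ²)`, remaining coordinates shifted from `y`. -/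
noncomputable def nextLag (p : ℕ) (φ0 : ℝ) (φ : Fin p → ℝ) (α0 : ℝ) (α : Fin p → ℝ)
    (y : Fin p → ℝ) (x : ℝ) : Fin p → ℝ :=
  fun k =>
    if _ : (k : ℕ) = 0 then
      φ0 + (∑ j, φ j * y j) + x * Real.sqrt (α0 + ∑ j, α j * y j ^ 2)
    else y ⟨(k : ℕ) - 1, by have := k.isLt; omega⟩

/-- The drift test function `V_{γ,r}(y) = 1 + ∑ₖ γₖ |yₖ|^r`. -/
noncomputable def testV (p : ℕ) (γ : Fin p → ℝ) (r : ℝ) (y : Fin p → ℝ) : ℝ :=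
  1 + ∑ k, γ k * |y k| ^ r

lemma abs_add_rpow_le {r : ℝ} (hr0 : 0 ≤ r) (hr1 : r ≤ 1) (a b : ℝ) :
    |a + b| ^ r ≤ |a| ^ r + |b| ^ r :=
  (Real.rpow_le_rpow (abs_nonneg _) (abs_add_le a b) hr0).trans
    (Real.rpow_add_le_add_rpow (abs_nonneg a) (abs_nonneg b) hr0 hr1)

lemma abs_sum_rpow_le {ι : Type*} {r : ℝ} (hr0 : 0 < r) (hr1 : r ≤ 1) (s : Finset ι)
    (f : ι → ℝ) : |∑ i ∈ s, f i| ^ r ≤ ∑ i ∈ s, |f i| ^ r :=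
  Finset.le_sum_of_subadditive (fun a => |a| ^ r) (by simp [hr0.ne'])
    (abs_add_rpow_le hr0.le hr1) s f

lemma sqrt_add_sum_mul_sq_rpow_le {ι : Type*} [Fintype ι] {r : ℝ} (hr0 : 0 < r) (hr1 : r ≤ 1)
    {α0 : ℝ} {α : ι → ℝ} (hα0 : 0 ≤ α0) (hα : ∀ j, 0 ≤ α j) (y : ι → ℝ) :
    √(α0 + ∑ j, α j * y j ^ 2) ^ r ≤ α0 ^ (r / 2) + ∑ j, α j ^ (r / 2) * |y j| ^ r := by
  have hr2 : 0 < r / 2 := by positivity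
  have hterm : ∀ j, |α j * y j ^ 2| ^ (r / 2) = α j ^ (r / 2) * |y j| ^ r := fun j => by
    rw [abs_of_nonneg (mul_nonneg (hα j) (sq_nonneg _)), Real.mul_rpow (hα j) (sq_nonneg _),
      Real.rpow_div_two_eq_sqrt r (sq_nonneg _), Real.sqrt_sq_eq_abs]
  have hsum : 0 ≤ α0 + ∑ j, α j * y j ^ 2 :=
    add_nonneg hα0 (Finset.sum_nonneg fun j _ => mul_nonneg (hα j) (sq_nonneg _))
  calc √(α0 + ∑ j, α j * y j ^ 2) ^ r = |α0 + ∑ j, α j * y j ^ 2| ^ (r / 2) := by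
        rw [abs_of_nonneg hsum, Real.rpow_div_two_eq_sqrt r hsum]
    _ ≤ |α0| ^ (r / 2) + |∑ j, α j * y j ^ 2| ^ (r / 2) := abs_add_rpow_le hr2.le (by linarith) _ _
    _ ≤ α0 ^ (r / 2) + ∑ j, α j ^ (r / 2) * |y j| ^ r := by
        rw [abs_of_nonneg hα0, ← Finset.sum_congr rfl fun j _ => hterm j]
        gcongr
        exact abs_sum_rpow_le hr2 (by linarith) _ _

lemma abs_add_sum_mul_add_mul_sqrt_rpow_le {ι : Type*} [Fintype ι] {r : ℝ} (hr0 : 0 < r)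
    (hr1 : r ≤ 1) (φ0 : ℝ) (φ : ι → ℝ) {α0 : ℝ} {α : ι → ℝ} (hα0 : 0 ≤ α0) (hα : ∀ j, 0 ≤ α j)
    (y : ι → ℝ) (x : ℝ) :
    |φ0 + ∑ j, φ j * y j + x * √(α0 + ∑ j, α j * y j ^ 2)| ^ r ≤
      |φ0| ^ r + ∑ j, |φ j| ^ r * |y j| ^ r
        + |x| ^ r * (α0 ^ (r / 2) + ∑ j, α j ^ (r / 2) * |y j| ^ r) := by
  calc _ ≤ |φ0| ^ r + ∑ j, |φ j * y j| ^ r + |x * √(α0 + ∑ j, α j * y j ^ 2)| ^ r := by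
        refine (abs_add_rpow_le hr0.le hr1 _ _).trans ?_
        gcongr
        exact (abs_add_rpow_le hr0.le hr1 _ _).trans (by gcongr; exact abs_sum_rpow_le hr0 hr1 _ _)
    _ ≤ _ := by
        simp only [abs_mul, abs_of_nonneg (Real.sqrt_nonneg _), Real.mul_rpow (abs_nonneg _)
          (abs_nonneg _), Real.mul_rpow (abs_nonneg _) (Real.sqrt_nonneg _)]
        gcongr
        exact sqrt_add_sum_mul_sq_rpow_le hr0 hr1 hα0 hα y

section nextLag

variable {n : ℕ} (φ0 : ℝ) (φ : Fin (n + 1) → ℝ) (α0 : ℝ) (α y : Fin (n + 1) → ℝ) (x : ℝ)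

lemma nextLag_zero :
    nextLag (n + 1) φ0 φ α0 α y x 0 = φ0 + ∑ j, φ j * y j + x * √(α0 + ∑ j, α j * y j ^ 2) :=
  rfl

lemma nextLag_succ (k : Fin n) : nextLag (n + 1) φ0 φ α0 α y x k.succ = y k.castSucc :=
  dif_neg (Nat.succ_ne_zero k)

end nextLag

lemma testV_nextLag_le {p : ℕ} (w : ℕ → ℝ) (hw : 0 ≤ w p) (r φ0 : ℝ) (φ : Fin p → ℝ) (α0 : ℝ)
    (α : Fin p → ℝ) (y : Fin p → ℝ) (x : ℝ) :
    testV p (fun k => w k) r (nextLag p φ0 φ α0 α y x) ≤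
      1 + w 0 * |φ0 + ∑ j, φ j * y j + x * √(α0 + ∑ j, α j * y j ^ 2)| ^ r
        + ∑ j : Fin p, w (j + 1) * |y j| ^ r := by
  cases p with
  | zero => simpa [testV] using mul_nonneg hw (Real.rpow_nonneg (abs_nonneg _) r)
  | succ n =>
    have hlast : 0 ≤ w (n + 1) * |y (Fin.last n)| ^ r :=
      mul_nonneg hw (Real.rpow_nonneg (abs_nonneg _) r)
    rw [testV, Fin.sum_univ_succ, Fin.sum_univ_castSucc (f := fun j => w (j + 1) * |y j| ^ r)]
    simp only [nextLag_zero, nextLag_succ, Fin.val_zero, Fin.val_succ, Fin.val_castSucc,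
      Fin.val_last]
    linarith

lemma one_le_testV {p : ℕ} {γ : Fin p → ℝ} (hγ : ∀ k, 0 ≤ γ k) (r : ℝ) (y : Fin p → ℝ) :
    1 ≤ testV p γ r y :=
  le_add_of_nonneg_right <| Finset.sum_nonneg fun k _ =>
    mul_nonneg (hγ k) (Real.rpow_nonneg (abs_nonneg _) r)

lemma integral_testV_nextLag_le {p : ℕ} (μ : Measure ℝ) [IsProbabilityMeasure μ] {r : ℝ}
    (hr0 : 0 < r) (hr1 : r ≤ 1) (hmr : Integrable (fun x => |x| ^ r) μ) {w : ℕ → ℝ}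
    (hw : ∀ k ≤ p, 0 ≤ w k) (φ0 : ℝ) (φ : Fin p → ℝ) {α0 : ℝ} {α : Fin p → ℝ} (hα0 : 0 ≤ α0)
    (hα : ∀ j, 0 ≤ α j) (y : Fin p → ℝ) :
    ∫ x, testV p (fun k => w k) r (nextLag p φ0 φ α0 α y x) ∂μ ≤
      1 + w 0 * (|φ0| ^ r + α0 ^ (r / 2) * ∫ x, |x| ^ r ∂μ)
        + ∑ j, (w 0 * (|φ j| ^ r + α j ^ (r / 2) * ∫ x, |x| ^ r ∂μ) + w (j + 1)) * |y j| ^ r := by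
  set A := 1 + w 0 * (|φ0| ^ r + ∑ j, |φ j| ^ r * |y j| ^ r) + ∑ j : Fin p, w (j + 1) * |y j| ^ r
  set B := w 0 * (α0 ^ (r / 2) + ∑ j, α j ^ (r / 2) * |y j| ^ r)
  have hbound (x : ℝ) : testV p (fun k => w k) r (nextLag p φ0 φ α0 α y x) ≤ A + B * |x| ^ r := by
    refine (testV_nextLag_le w (hw p le_rfl) r φ0 φ α0 α y x).trans ?_
    have := mul_le_mul_of_nonneg_left
      (abs_add_sum_mul_add_mul_sqrt_rpow_le hr0 hr1 φ0 φ hα0 hα y x) (hw 0 (Nat.zero_le p))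
    linarith
  have hnonneg (x : ℝ) : 0 ≤ testV p (fun k => w k) r (nextLag p φ0 φ α0 α y x) :=
    zero_le_one.trans (one_le_testV (fun k => hw k k.is_lt.le) r _)
  calc ∫ x, testV p (fun k => w k) r (nextLag p φ0 φ α0 α y x) ∂μ
      ≤ ∫ x, (A + B * |x| ^ r) ∂μ :=
        integral_mono_of_nonneg (ae_of_all _ hnonneg) ((integrable_const A).add (hmr.const_mul B))
          (ae_of_all _ hbound)
    _ = A + B * ∫ x, |x| ^ r ∂μ := by
        rw [integral_add (integrable_const A) (hmr.const_mul B), integral_const, integral_const_mul]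
        simp
    _ = _ := by
        simp only [A, B, mul_add, add_mul, Finset.mul_sum, Finset.sum_mul, Finset.sum_add_distrib]
        ring_nf

noncomputable def driftWeight (c : ℕ → ℝ) (ρ : ℝ) (j : ℕ) : ℝ :=
  ρ ^ j * (1 - ∑ k ∈ Finset.range j, c k / ρ ^ (k + 1))

section driftWeight

variable {c : ℕ → ℝ} {ρ : ℝ}

lemma driftWeight_zero : driftWeight c ρ 0 = 1 := by simp [driftWeight]

lemma driftWeight_succ (hρ : ρ ≠ 0) (j : ℕ) :
    driftWeight c ρ (j + 1) = ρ * driftWeight c ρ j - c j := by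
  simp only [driftWeight, Finset.sum_range_succ]
  field_simp
  ring

lemma driftWeight_pos {p j : ℕ} (hc : ∀ k < p, 0 ≤ c k) (hρ : ρ ∈ Set.Ioo 0 1)
    (hS : ∑ k ∈ Finset.range p, c k < ρ ^ p) (hj : j ≤ p) : 0 < driftWeight c ρ j := by
  obtain ⟨hρ0, hρ1⟩ := hρ
  refine mul_pos (pow_pos hρ0 j) (sub_pos.2 ?_)
  calc ∑ k ∈ Finset.range j, c k / ρ ^ (k + 1)
      ≤ ∑ k ∈ Finset.range p, c k / ρ ^ (k + 1) :=
        Finset.sum_le_sum_of_subset_of_nonneg (Finset.range_subset_range.2 hj)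
          fun k hk _ => div_nonneg (hc k (Finset.mem_range.1 hk)) (by positivity)
    _ ≤ ∑ k ∈ Finset.range p, c k / ρ ^ p := by
        refine Finset.sum_le_sum fun k hk => ?_
        have hk := Finset.mem_range.1 hk
        exact div_le_div_of_nonneg_left (hc k hk) (by positivity)
          (pow_le_pow_of_le_one hρ0.le hρ1.le hk)
    _ < 1 := by
        rw [← Finset.sum_div, div_lt_one (by positivity)]
        exact hS

end driftWeight

lemma exists_mem_Ioo_lt_pow {S : ℝ} (hS : S < 1) (p : ℕ) :
    ∃ ρ ∈ Set.Ioo (0 : ℝ) 1, S < ρ ^ p := by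
  have hpow : ∀ᶠ ρ in nhdsWithin (1 : ℝ) (Set.Iio 1), S < ρ ^ p :=
    nhdsWithin_le_nhds <| ((continuous_pow p).tendsto' 1 1 (one_pow p)).eventually
      (lt_mem_nhds hS)
  exact (hpow.and (Ioo_mem_nhdsLT zero_lt_one)).exists.imp fun ρ h => ⟨h.2, h.1⟩

lemma integral_testV_driftWeight_nextLag_le {p : ℕ} (μ : Measure ℝ) [IsProbabilityMeasure μ]
    {r : ℝ} (hr0 : 0 < r) (hr1 : r ≤ 1) (hmr : Integrable (fun x => |x| ^ r) μ) {c : ℕ → ℝ}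
    {ρ : ℝ} (hρ : 0 < ρ) (hw : ∀ k ≤ p, 0 ≤ driftWeight c ρ k) (φ0 : ℝ) (φ : Fin p → ℝ)
    {α0 : ℝ} {α : Fin p → ℝ} (hα0 : 0 ≤ α0) (hα : ∀ j, 0 ≤ α j)
    (hc : ∀ j : Fin p, |φ j| ^ r + α j ^ (r / 2) * ∫ x, |x| ^ r ∂μ ≤ c j) (y : Fin p → ℝ) :
    ∫ x, testV p (fun k => driftWeight c ρ k) r (nextLag p φ0 φ α0 α y x) ∂μ ≤
      ρ * testV p (fun k => driftWeight c ρ k) r y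
        + (1 + (|φ0| ^ r + α0 ^ (r / 2) * ∫ x, |x| ^ r ∂μ)) := by
  refine (integral_testV_nextLag_le μ hr0 hr1 hmr hw φ0 φ hα0 hα y).trans ?_
  calc _ ≤ 1 + (|φ0| ^ r + α0 ^ (r / 2) * ∫ x, |x| ^ r ∂μ)
        + ∑ j : Fin p, ρ * driftWeight c ρ j * |y j| ^ r := by
        gcongr with j
        · rw [driftWeight_zero, one_mul]
        · rw [driftWeight_zero, driftWeight_succ hρ.ne', one_mul]
          linarith [hc j]
    _ ≤ _ := by
        simp only [testV, mul_add, Finset.mul_sum, mul_assoc]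
        linarith

theorem bdar_drift_condition_small_r_general (p : ℕ)
    (φ0 : Fin 2 → ℝ) (φ : Fin 2 → Fin p → ℝ)
    (α0 : Fin 2 → ℝ) (α : Fin 2 → Fin p → ℝ)
    (hα0 : ∀ i, 0 < α0 i) (hα : ∀ i j, 0 ≤ α i j)
    (μ : Measure ℝ) [IsProbabilityMeasure μ]
    (r : ℝ) (hr : r ∈ Set.Ioc (0 : ℝ) 1)
    (hmr : Integrable (fun x => |x| ^ r) μ)
    (hcond : ∑ j, ((max |φ 0 j| |φ 1 j|) ^ r
        + (max (α 0 j) (α 1 j)) ^ (r / 2) * ∫ x, |x| ^ r ∂μ) < 1) :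
    ∃ γ : Fin p → ℝ, (∀ k, 0 < γ k) ∧
      ∃ ρ : ℝ, ρ ∈ Set.Ioo (0 : ℝ) 1 ∧ ∃ C : ℝ, 0 ≤ C ∧
        ∀ y : Fin p → ℝ, ∀ i : Fin 2,
          ∫ x, testV p γ r (nextLag p (φ0 i) (φ i) (α0 i) (α i) y x) ∂μ
            ≤ ρ * testV p γ r y + C := by
  obtain ⟨hr0, hr1⟩ := hr
  set m := ∫ x, |x| ^ r ∂μ
  set b : Fin p → ℝ := fun j => (max |φ 0 j| |φ 1 j|) ^ r + (max (α 0 j) (α 1 j)) ^ (r / 2) * m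
  set c : ℕ → ℝ := fun k => if h : k < p then b ⟨k, h⟩ else 0
  have hc (i : Fin 2) (j : Fin p) : |φ i j| ^ r + α i j ^ (r / 2) * m ≤ c j := by
    simp only [c, b, Fin.is_lt, dif_pos]
    fin_cases i <;> dsimp <;> gcongr <;> simp [hα]
  have hc_nonneg (k : ℕ) (hk : k < p) : 0 ≤ c k :=
    le_trans (by positivity [hα 0 ⟨k, hk⟩]) (hc 0 ⟨k, hk⟩)
  obtain ⟨ρ, hρ, hρS⟩ := exists_mem_Ioo_lt_pow (Finset.sum_fin_eq_sum_range b ▸ hcond) p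
  have hw (k : ℕ) (hk : k ≤ p) : 0 < driftWeight c ρ k := driftWeight_pos hc_nonneg hρ hρS hk
  set K : Fin 2 → ℝ := fun i => |φ0 i| ^ r + α0 i ^ (r / 2) * m
  have hK (i : Fin 2) : 0 ≤ K i := by positivity [(hα0 i).le]
  refine ⟨fun k => driftWeight c ρ k, fun k => hw k k.is_lt.le, ρ, hρ, 1 + ∑ i, K i,
    add_nonneg zero_le_one (Finset.sum_nonneg fun i _ => hK i), fun y i => ?_⟩
  refine (integral_testV_driftWeight_nextLag_le μ hr0 hr1 hmr hρ.1 (fun k hk => (hw k hk).le)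
    (φ0 i) (φ i) (hα0 i).le (hα i) (hc i) y).trans ?_
  gcongr
  exact Finset.single_le_sum (fun i _ => hK i) (Finset.mem_univ i)

/-- Drift condition for the BDAR model, case `r ∈ (0,1]`: if
`∑ⱼ (bⱼ^r + aⱼ^{r/2} m_r) < 1` then there are weights `γ`, `ρ ∈ (0,1)` and `C ≥ 0` with
`∫ V_{γ,r}(N_i(y,x)) dμ(x) ≤ ρ V_{γ,r}(y) + C` for all `y` and both regimes. -/
theorem bdar_drift_condition_small_r (p : ℕ) (hp : 1 ≤ p)
    (φ0 : Fin 2 → ℝ) (φ : Fin 2 → Fin p → ℝ)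
    (α0 : Fin 2 → ℝ) (α : Fin 2 → Fin p → ℝ)
    (hα0 : ∀ i, 0 < α0 i) (hα : ∀ i j, 0 ≤ α i j)
    (μ : Measure ℝ) [IsProbabilityMeasure μ]
    (r : ℝ) (hr : r ∈ Set.Ioc (0 : ℝ) 1)
    (hmr : Integrable (fun x => |x| ^ r) μ)
    (hcond : ∑ j, ((max |φ 0 j| |φ 1 j|) ^ r
        + (max (α 0 j) (α 1 j)) ^ (r / 2) * ∫ x, |x| ^ r ∂μ) < 1) :
    ∃ γ : Fin p → ℝ, (∀ k, 0 < γ k) ∧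
      ∃ ρ : ℝ, ρ ∈ Set.Ioo (0 : ℝ) 1 ∧ ∃ C : ℝ, 0 ≤ C ∧
        ∀ y : Fin p → ℝ, ∀ i : Fin 2,
          ∫ x, testV p γ r (nextLag p (φ0 i) (φ i) (α0 i) (α i) y x) ∂μ
            ≤ ρ * testV p γ r y + C :=
  bdar_drift_condition_small_r_general p φ0 φ α0 α hα0 hα μ r hr hmr hcond
end

section
/- Let μ be a probability measure on ℝ with ∫x dμ = 0, ∫x³ dμ = 0 and m₄ = ∫x⁴ dμ < ∞, and write m₂ = ∫x² dμ. If (1+3m₂)(Σ_{j=1}^p b_j)^4 + (m₄+3m₂)(Σ_{j=1}^p a_j)² < 1, then there exist weights γ ∈ (0,∞)^p, ρ ∈ (0,1) and C ≥ 0 such that for every y ∈ ℝ^p and each i ∈ {1,2}: ∫ V_{γ,4}(N_i(y,x)) dμ(x) ≤ ρ·V_{γ,4}(y) + C. -/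
/-!
Write the first coordinate of `N_i(y, X)` as `m + σX` with `m = φ₀ + ∑ φⱼ yⱼ` and
`σ² = s = α₀ + ∑ αⱼ yⱼ²`. Since the first and third moments vanish,
`E (m + σX)⁴ = m⁴ + 6 m² s m₂ + s² m₄ ≤ (1 + 3m₂) m⁴ + (m₄ + 3m₂) s²`.
Jensen's inequality bounds `m⁴` by `t⁴ B³ ∑ bⱼ yⱼ⁴` and `s²` by `t⁴ A ∑ aⱼ yⱼ⁴` up to additive
constants, for any `t > 1`, so the first coordinate contributes `∑ cⱼ yⱼ⁴ + C` with
`∑ cⱼ = t⁴ ((1 + 3m₂) B⁴ + (m₄ + 3m₂) A²) < 1` for `t` close to `1`. The remaining coordinates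
are shifted copies of `y`, and the weights `γₖ = ∑_{j ≥ k} (cⱼ + δ)` make the resulting linear
map contract `∑ γₖ yₖ⁴` by the factor `1 - δ`.
-/

open MeasureTheory

open Finset Filter Topology

theorem integrable_pow_of_le {μ : Measure ℝ} [IsFiniteMeasure μ] {n k : ℕ}
    (hn : Integrable (fun x => x ^ n) μ) (hkn : k ≤ n) : Integrable (fun x : ℝ => x ^ k) μ := by
  have hk := integrable_norm_pow_of_le (μ := μ) (f := fun x => x) (by fun_prop) hkn
    (by simpa only [norm_pow] using hn.norm)
  exact (integrable_norm_iff (by fun_prop)).1 (by simpa only [norm_pow] using hk)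

theorem add_mul_pow_eq_sum (m σ x : ℝ) (n : ℕ) :
    (m + x * σ) ^ n = ∑ k ∈ range (n + 1), m ^ (n - k) * σ ^ k * n.choose k * x ^ k := by
  rw [add_comm, add_pow]
  exact sum_congr rfl fun k _ => by ring

theorem integrable_add_mul_pow {μ : Measure ℝ} [IsFiniteMeasure μ] {n : ℕ}
    (hn : Integrable (fun x => x ^ n) μ) (m σ : ℝ) :
    Integrable (fun x => (m + x * σ) ^ n) μ := by
  simp_rw [add_mul_pow_eq_sum]
  exact integrable_finsetSum _ fun k hk =>
    (integrable_pow_of_le hn (Nat.lt_succ_iff.1 (mem_range.1 hk))).const_mul _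

theorem integral_add_mul_pow_four {μ : Measure ℝ} [IsProbabilityMeasure μ]
    (hmean : ∫ x, x ∂μ = 0) (hthird : ∫ x, x ^ 3 ∂μ = 0)
    (hm4 : Integrable (fun x => x ^ 4) μ) (m σ : ℝ) :
    ∫ x, (m + x * σ) ^ 4 ∂μ
      = m ^ 4 + 6 * m ^ 2 * σ ^ 2 * ∫ x, x ^ 2 ∂μ + σ ^ 4 * ∫ x, x ^ 4 ∂μ := by
  simp_rw [add_mul_pow_eq_sum]
  rw [integral_finsetSum _ fun k hk =>
    (integrable_pow_of_le hm4 (Nat.lt_succ_iff.1 (mem_range.1 hk))).const_mul _]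
  have h42 : (Nat.choose 4 2 : ℝ) = 6 := by norm_num [Nat.choose]
  simp only [sum_range_succ, sum_range_zero, integral_const_mul, pow_zero, pow_one, integral_const,
    probReal_univ, smul_eq_mul, hmean, hthird, h42, Nat.choose_zero_right, Nat.choose_self]
  ring

theorem pow_sum_mul_le_sum_pow_mul_sum_mul_pow {ι : Type*} (s : Finset ι) {w z : ι → ℝ}
    (hw : ∀ i ∈ s, 0 ≤ w i) (hz : ∀ i ∈ s, 0 ≤ z i) (n : ℕ) :
    (∑ i ∈ s, w i * z i) ^ (n + 1) ≤ (∑ i ∈ s, w i) ^ n * ∑ i ∈ s, w i * z i ^ (n + 1) := by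
  rcases (sum_nonneg hw).eq_or_lt with hW | hW
  · have hw0 := (sum_eq_zero_iff_of_nonneg hw).1 hW.symm
    have h1 : ∑ i ∈ s, w i * z i = 0 := sum_eq_zero fun i hi => by rw [hw0 i hi, zero_mul]
    have h2 : ∑ i ∈ s, w i * z i ^ (n + 1) = 0 := sum_eq_zero fun i hi => by rw [hw0 i hi, zero_mul]
    simp [h1, h2]
  · have h := Real.pow_arith_mean_le_arith_mean_pow s (fun i => w i / ∑ j ∈ s, w j) z
      (fun i hi => div_nonneg (hw i hi) hW.le) (by rw [← sum_div, div_self hW.ne']) hz (n + 1)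
    simp_rw [div_mul_eq_mul_div, ← sum_div, div_pow] at h
    rw [div_le_div_iff₀ (by positivity) hW] at h
    rw [pow_succ (∑ j ∈ s, w j) n] at h
    refine le_of_mul_le_mul_right ?_ hW
    linarith

theorem pow_le_pow_add_pow_of_le_add {u c S t : ℝ} (n : ℕ) (hu : 0 ≤ u) (hc : 0 ≤ c)
    (hS : 0 ≤ S) (huS : u ≤ c + S) (ht : 1 < t) :
    u ^ n ≤ (t * S) ^ n + (t * c / (t - 1)) ^ n := by
  have ht' : 0 < t - 1 := by linarith
  rcases le_or_gt c ((t - 1) * S) with h | h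
  · calc u ^ n ≤ (t * S) ^ n := pow_le_pow_left₀ hu (by linarith) n
      _ ≤ _ := le_add_of_nonneg_right (by positivity)
  · calc u ^ n ≤ (t * c / (t - 1)) ^ n :=
          pow_le_pow_left₀ hu (by rw [le_div_iff₀ ht']; nlinarith) n
      _ ≤ _ := le_add_of_nonneg_left (by positivity)

theorem exists_one_lt_pow_mul_lt {θ : ℝ} (n : ℕ) (hθ : θ < 1) : ∃ t, 1 < t ∧ t ^ n * θ < 1 := by
  have h : Tendsto (fun t : ℝ => t ^ n * θ) (𝓝[>] 1) (𝓝 θ) :=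
    ((by fun_prop : Continuous fun t : ℝ => t ^ n * θ).tendsto' 1 θ (by simp)).mono_left
      nhdsWithin_le_nhds
  obtain ⟨t, ht, ht1⟩ := ((h.eventually (gt_mem_nhds hθ)).and self_mem_nhdsWithin).exists
  exact ⟨t, ht1, ht⟩

theorem pow_succ_le_of_le_add_sum_mul {ι : Type*} (s : Finset ι) {w z : ι → ℝ} {u c t : ℝ}
    (hw : ∀ i ∈ s, 0 ≤ w i) (hz : ∀ i ∈ s, 0 ≤ z i) (hu : 0 ≤ u) (hc : 0 ≤ c)
    (huc : u ≤ c + ∑ i ∈ s, w i * z i) (ht : 1 < t) (n : ℕ) :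
    u ^ (n + 1) ≤ t ^ (n + 1) * ((∑ i ∈ s, w i) ^ n * ∑ i ∈ s, w i * z i ^ (n + 1))
      + (t * c / (t - 1)) ^ (n + 1) := by
  have hS : 0 ≤ ∑ i ∈ s, w i * z i := sum_nonneg fun i hi => mul_nonneg (hw i hi) (hz i hi)
  calc u ^ (n + 1) ≤ (t * ∑ i ∈ s, w i * z i) ^ (n + 1) + (t * c / (t - 1)) ^ (n + 1) :=
        pow_le_pow_add_pow_of_le_add _ hu hc hS huc ht
    _ ≤ _ := by
        rw [mul_pow]
        gcongr
        exact pow_sum_mul_le_sum_pow_mul_sum_mul_pow s hw hz n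

theorem le_max_fin_two {α : Type*} [LinearOrder α] (f : Fin 2 → α) (i : Fin 2) :
    f i ≤ max (f 0) (f 1) := by
  fin_cases i
  · exact le_max_left _ _
  · exact le_max_right _ _

theorem exists_drift_weights {n : ℕ} (c : Fin n → ℝ) (hc : ∀ j, 0 ≤ c j) (hsum : ∑ j, c j < 1) :
    ∃ γ : ℕ → ℝ, (∀ k < n, 0 < γ k) ∧ γ n = 0 ∧
      ∃ ρ ∈ Set.Ioo (0 : ℝ) 1, ∀ j : Fin n, γ (j + 1) + γ 0 * c j ≤ ρ * γ j := by
  set δ := (1 - ∑ j, c j) / (n + 2)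
  have hδ : 0 < δ := div_pos (by linarith) (by positivity)
  have hnδ : n * δ + δ < 1 - ∑ j, c j := by
    have : (n + 2) * δ = 1 - ∑ j, c j := mul_div_cancel₀ _ (by positivity)
    linarith
  -- `γ j - γ (j + 1) = c j + δ` and `γ ≤ 1 - δ`, hence
  -- `γ (j + 1) + γ 0 * c j ≤ γ j - δ ≤ (1 - δ) * γ j`
  set γ : ℕ → ℝ := fun k => ∑ j ∈ univ.filter (fun j : Fin n => k ≤ j), (c j + δ)
  have hterm : ∀ j, 0 ≤ c j + δ := fun j => by linarith [hc j]
  have hγ_succ : ∀ j : Fin n, γ j = c j + δ + γ (j + 1) := by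
    intro j
    have hsplit : univ.filter (fun i : Fin n => (j : ℕ) ≤ i)
        = insert j (univ.filter fun i : Fin n => (j : ℕ) + 1 ≤ i) := by
      ext i; simp only [mem_filter, mem_univ, true_and, mem_insert, Fin.ext_iff]; omega
    simp only [γ]
    rw [hsplit, sum_insert (by simp)]
  have hγ_le : ∀ k, γ k ≤ 1 - δ := by
    intro k
    calc γ k ≤ γ 0 := sum_le_sum_of_subset_of_nonneg (monotone_filter_right _ fun i _ => by omega)
          fun j _ _ => hterm j
      _ = ∑ j, c j + n * δ := by simp [γ, sum_add_distrib]
      _ ≤ 1 - δ := by linarith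
  have hδ1 : δ < 1 := by
    have : 0 ≤ ∑ j, c j := sum_nonneg fun j _ => hc j
    have : 0 ≤ (n : ℝ) * δ := by positivity
    linarith
  refine ⟨γ, fun k hk => sum_pos (fun j _ => by linarith [hc j]) ⟨⟨k, hk⟩, by simp⟩,
    by simp [γ, filter_false_of_mem fun (j : Fin n) _ => not_le.2 j.isLt], 1 - δ,
    ⟨by linarith, by linarith⟩, fun j => ?_⟩
  have := hγ_succ j
  nlinarith [hγ_le 0, hγ_le j, hc j]

theorem testV_four (p : ℕ) (γ y : Fin p → ℝ) : testV p γ 4 y = 1 + ∑ k, γ k * y k ^ 4 := by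
  simp only [testV, show (4 : ℝ) = (4 : ℕ) by norm_num, Real.rpow_natCast,
    Even.pow_abs (by decide : Even 4)]

theorem testV_four_nextLag {q : ℕ} {γ : ℕ → ℝ} (hγ : γ (q + 1) = 0) (φ0 α0 : ℝ)
    (φ α y : Fin (q + 1) → ℝ) (x : ℝ) :
    testV (q + 1) (fun k => γ k) 4 (nextLag (q + 1) φ0 φ α0 α y x)
      = 1 + γ 0 * (φ0 + ∑ j, φ j * y j + x * √(α0 + ∑ j, α j * y j ^ 2)) ^ 4
        + ∑ j : Fin (q + 1), γ (j + 1) * y j ^ 4 := by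
  rw [testV_four, Fin.sum_univ_castSucc (fun j : Fin (q + 1) => γ (j + 1) * y j ^ 4),
    Fin.sum_univ_succ]
  simp [nextLag, hγ, Fin.castSucc, Fin.castAdd, Fin.castLE]
  ring

theorem integral_arch_step_pow_four_le {μ : Measure ℝ} [IsProbabilityMeasure μ]
    (hmean : ∫ x, x ∂μ = 0) (hthird : ∫ x, x ^ 3 ∂μ = 0) (hm4 : Integrable (fun x => x ^ 4) μ)
    {ι : Type*} [Fintype ι] {φ0 α0 c0 e0 t : ℝ} {φ α b a : ι → ℝ}
    (hφ0 : |φ0| ≤ c0) (hφ : ∀ j, |φ j| ≤ b j) (hα0 : 0 ≤ α0) (hα0e : α0 ≤ e0)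
    (hα : ∀ j, 0 ≤ α j) (hαa : ∀ j, α j ≤ a j) (ht : 1 < t) (y : ι → ℝ) :
    ∫ x, (φ0 + ∑ j, φ j * y j + x * √(α0 + ∑ j, α j * y j ^ 2)) ^ 4 ∂μ
      ≤ ∑ j, t ^ 4 * ((1 + 3 * ∫ x, x ^ 2 ∂μ) * (∑ j, b j) ^ 3 * b j
            + ((∫ x, x ^ 4 ∂μ) + 3 * ∫ x, x ^ 2 ∂μ) * (∑ j, a j) * a j) * y j ^ 4
        + ((1 + 3 * ∫ x, x ^ 2 ∂μ) * (t * c0 / (t - 1)) ^ 4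
          + ((∫ x, x ^ 4 ∂μ) + 3 * ∫ x, x ^ 2 ∂μ) * (t ^ 2 * e0 / (t ^ 2 - 1)) ^ 2) := by
  set m := φ0 + ∑ j, φ j * y j
  set s := α0 + ∑ j, α j * y j ^ 2
  set m2 := ∫ x, x ^ 2 ∂μ
  set m4 := ∫ x, x ^ 4 ∂μ
  set B := ∑ j, b j
  set A := ∑ j, a j
  have hm2_nonneg : 0 ≤ m2 := by positivity
  have hm4_nonneg : 0 ≤ m4 := by positivity
  have hb : ∀ j, 0 ≤ b j := fun j => (abs_nonneg _).trans (hφ j)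
  have ha : ∀ j, 0 ≤ a j := fun j => (hα j).trans (hαa j)
  have hs : 0 ≤ s := add_nonneg hα0 (sum_nonneg fun j _ => mul_nonneg (hα j) (sq_nonneg _))
  -- `6 m² s ≤ 3 m⁴ + 3 s²` absorbs the cross term
  have hZ : ∫ x, (m + x * √s) ^ 4 ∂μ ≤ (1 + 3 * m2) * m ^ 4 + (m4 + 3 * m2) * s ^ 2 := by
    rw [integral_add_mul_pow_four hmean hthird hm4, show √s ^ 4 = s ^ 2 by
      rw [show 4 = 2 * 2 from rfl, pow_mul, Real.sq_sqrt hs], Real.sq_sqrt hs]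
    nlinarith [mul_nonneg hm2_nonneg (sq_nonneg (m ^ 2 - s))]
  have hm : m ^ 4 ≤ t ^ 4 * (B ^ 3 * ∑ j, b j * y j ^ 4) + (t * c0 / (t - 1)) ^ 4 := by
    have h := pow_succ_le_of_le_add_sum_mul univ (fun j _ => hb j) (fun j _ => abs_nonneg (y j))
      (abs_nonneg m) ((abs_nonneg _).trans hφ0) ?_ ht 3
    · simpa only [Even.pow_abs (by decide : Even 4)] using h
    · calc |m| ≤ |φ0| + ∑ j, |φ j| * |y j| := by
            grw [abs_add_le, abs_sum_le_sum_abs]; simp only [abs_mul, le_refl]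
        _ ≤ c0 + ∑ j, b j * |y j| := by gcongr with j; exact hφ j
  have hs2 : s ^ 2 ≤ (t ^ 2) ^ 2 * (A * ∑ j, a j * (y j ^ 2) ^ 2)
      + (t ^ 2 * e0 / (t ^ 2 - 1)) ^ 2 := by
    simpa only [pow_one] using pow_succ_le_of_le_add_sum_mul univ (fun j _ => ha j)
      (fun j _ => sq_nonneg (y j)) hs (hα0.trans hα0e) (add_le_add hα0e (sum_le_sum fun j _ =>
        mul_le_mul_of_nonneg_right (hαa j) (sq_nonneg _))) (one_lt_pow₀ ht two_ne_zero) 1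
  calc _ ≤ (1 + 3 * m2) * m ^ 4 + (m4 + 3 * m2) * s ^ 2 := hZ
    _ ≤ (1 + 3 * m2) * (t ^ 4 * (B ^ 3 * ∑ j, b j * y j ^ 4) + (t * c0 / (t - 1)) ^ 4)
        + (m4 + 3 * m2) * ((t ^ 2) ^ 2 * (A * ∑ j, a j * (y j ^ 2) ^ 2)
          + (t ^ 2 * e0 / (t ^ 2 - 1)) ^ 2) := by gcongr
    _ = _ := by
        have hsum :
            ∑ j, t ^ 4 * ((1 + 3 * m2) * B ^ 3 * b j + (m4 + 3 * m2) * A * a j) * y j ^ 4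
            = t ^ 4 * (1 + 3 * m2) * B ^ 3 * ∑ j, b j * y j ^ 4
              + t ^ 4 * (m4 + 3 * m2) * A * ∑ j, a j * (y j ^ 2) ^ 2 := by
          rw [mul_sum _ (fun j => b j * y j ^ 4), mul_sum _ (fun j => a j * (y j ^ 2) ^ 2),
            ← sum_add_distrib]
          exact sum_congr rfl fun j _ => by ring
        rw [hsum]
        ring

theorem integral_testV_nextLag_le_s4 {μ : Measure ℝ} [IsProbabilityMeasure μ]
    (hm4 : Integrable (fun x => x ^ 4) μ) {q : ℕ} {φ0 α0 ρ C : ℝ} {φ α c : Fin (q + 1) → ℝ}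
    {γ : ℕ → ℝ} (hγ : γ (q + 1) = 0) (hγ0 : 0 ≤ γ 0)
    (hdrift : ∀ j : Fin (q + 1), γ (j + 1) + γ 0 * c j ≤ ρ * γ j) (y : Fin (q + 1) → ℝ)
    (hZ : ∫ x, (φ0 + ∑ j, φ j * y j + x * √(α0 + ∑ j, α j * y j ^ 2)) ^ 4 ∂μ
      ≤ ∑ j, c j * y j ^ 4 + C) :
    ∫ x, testV (q + 1) (fun k => γ k) 4 (nextLag (q + 1) φ0 φ α0 α y x) ∂μ
      ≤ ρ * testV (q + 1) (fun k => γ k) 4 y + (1 - ρ + γ 0 * C) := by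
  simp_rw [testV_four_nextLag hγ]
  have hZint := (integrable_add_mul_pow hm4 (φ0 + ∑ j, φ j * y j)
    √(α0 + ∑ j, α j * y j ^ 2)).const_mul (γ 0)
  rw [integral_add (by exact (integrable_const _).add hZint) (integrable_const _),
    integral_add (integrable_const _) hZint, integral_const_mul]
  simp only [integral_const, probReal_univ, one_smul, testV_four]
  have hweights : ∑ j : Fin (q + 1), γ (j + 1) * y j ^ 4 + γ 0 * ∑ j, c j * y j ^ 4
      ≤ ρ * ∑ j : Fin (q + 1), γ j * y j ^ 4 := by
    rw [mul_sum, mul_sum, ← sum_add_distrib]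
    gcongr with j
    nlinarith [hdrift j, pow_nonneg (sq_nonneg (y j)) 2]
  nlinarith [mul_le_mul_of_nonneg_left hZ hγ0]

/-- Drift condition for the BDAR model, case `r = 4`: if `∫x dμ = 0`, `∫x³ dμ = 0`,
`m₄ < ∞` and `(1+3m₂)(∑ⱼ bⱼ)⁴ + (m₄+3m₂)(∑ⱼ aⱼ)² < 1`, then there are weights `γ`,
`ρ ∈ (0,1)` and `C ≥ 0` with
`∫ V_{γ,4}(N_i(y,x)) dμ(x) ≤ ρ V_{γ,4}(y) + C` for all `y` and both regimes. -/
theorem bdar_drift_condition_fourth (p : ℕ) (hp : 1 ≤ p)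
    (φ0 : Fin 2 → ℝ) (φ : Fin 2 → Fin p → ℝ)
    (α0 : Fin 2 → ℝ) (α : Fin 2 → Fin p → ℝ)
    (hα0 : ∀ i, 0 < α0 i) (hα : ∀ i j, 0 ≤ α i j)
    (μ : Measure ℝ) [IsProbabilityMeasure μ]
    (hmean : ∫ x, x ∂μ = 0) (hthird : ∫ x, x ^ 3 ∂μ = 0)
    (hm4 : Integrable (fun x => x ^ 4) μ)
    (hcond : (1 + 3 * ∫ x, x ^ 2 ∂μ) * (∑ j, max |φ 0 j| |φ 1 j|) ^ 4
        + ((∫ x, x ^ 4 ∂μ) + 3 * ∫ x, x ^ 2 ∂μ) * (∑ j, max (α 0 j) (α 1 j)) ^ 2 < 1) :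
    ∃ γ : Fin p → ℝ, (∀ k, 0 < γ k) ∧
      ∃ ρ : ℝ, ρ ∈ Set.Ioo (0 : ℝ) 1 ∧ ∃ C : ℝ, 0 ≤ C ∧
        ∀ y : Fin p → ℝ, ∀ i : Fin 2,
          ∫ x, testV p γ 4 (nextLag p (φ0 i) (φ i) (α0 i) (α i) y x) ∂μ
            ≤ ρ * testV p γ 4 y + C := by
  obtain ⟨q, rfl⟩ : ∃ q, p = q + 1 := ⟨p - 1, by omega⟩
  set b : Fin (q + 1) → ℝ := fun j => max |φ 0 j| |φ 1 j|
  set a : Fin (q + 1) → ℝ := fun j => max (α 0 j) (α 1 j)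
  set K1 := 1 + 3 * ∫ x, x ^ 2 ∂μ
  set K2 := (∫ x, x ^ 4 ∂μ) + 3 * ∫ x, x ^ 2 ∂μ
  obtain ⟨t, ht, htθ⟩ := exists_one_lt_pow_mul_lt 4 hcond
  set c : Fin (q + 1) → ℝ := fun j => t ^ 4 * (K1 * (∑ j, b j) ^ 3 * b j + K2 * (∑ j, a j) * a j)
  have ha : ∀ j, 0 ≤ a j := fun j => (hα 0 j).trans (le_max_left _ _)
  have hc : ∀ j, 0 ≤ c j := fun j => by
    have hA := sum_nonneg fun j (_ : j ∈ univ) => ha j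
    have := ha j
    positivity
  have hcsum : ∑ j, c j < 1 := by
    convert htθ using 1
    simp only [c, ← mul_sum, sum_add_distrib]
    ring
  obtain ⟨γ, hγpos, hγlast, ρ, hρ, hdrift⟩ := exists_drift_weights c hc hcsum
  set C := K1 * (t * max |φ0 0| |φ0 1| / (t - 1)) ^ 4
    + K2 * (t ^ 2 * max (α0 0) (α0 1) / (t ^ 2 - 1)) ^ 2
  have hγ0 := hγpos 0 q.succ_pos
  refine ⟨fun k => γ k, fun k => hγpos k k.isLt, ρ, hρ, 1 - ρ + γ 0 * C,
    add_nonneg (by linarith [hρ.2]) (by positivity), fun y i => ?_⟩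
  exact integral_testV_nextLag_le_s4 hm4 hγlast hγ0.le hdrift y
    (integral_arch_step_pow_four_le hmean hthird hm4 (le_max_fin_two (|φ0 ·|) i)
      (fun j => le_max_fin_two (|φ · j|) i) (hα0 i).le (le_max_fin_two α0 i) (hα i)
      (fun j => le_max_fin_two (α · j) i) ht y)
end

section
/- Let ε be a real-valued random variable on a probability space whose distribution is symmetric (ε and −ε have the same law), and let r ∈ (1,2] with E|ε|^r < ∞. Then for all real numbers a ≥ 0 and b ≥ 0: E|a + bε|^r ≤ a^r + b^r·E|ε|^r. -/
/-!
The pointwise inequality `|x + y| ^ p + |x - y| ^ p ≤ 2 (|x| ^ p + |y| ^ p)` for `0 ≤ p ≤ 2`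
comes from the parallelogram law `|x + y|² + |x - y|² = 2 (x² + y²)`, pushed through the concave
map `s ↦ s ^ (p / 2)` and followed by its subadditivity. Applied with `x = a`, `y = b ε` and
averaged over the law of `ε`, symmetry turns the left-hand side into `2 E|a + b ε| ^ p`.
-/

open MeasureTheory ProbabilityTheory

lemma Real.abs_rpow_eq_sq_rpow_half (z p : ℝ) : |z| ^ p = (z ^ 2) ^ (p / 2) := by
  rw [← sq_abs, ← Real.rpow_natCast, ← Real.rpow_mul (abs_nonneg z)]
  ring_nf

lemma Real.abs_add_rpow_add_abs_sub_rpow_le {p : ℝ} (hp₀ : 0 ≤ p) (hp₂ : p ≤ 2) (x y : ℝ) :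
    |x + y| ^ p + |x - y| ^ p ≤ 2 * (|x| ^ p + |y| ^ p) := by
  have hq₀ : 0 ≤ p / 2 := by positivity
  have hq₁ : p / 2 ≤ 1 := by linarith
  have hconcave := (Real.concaveOn_rpow hq₀ hq₁).2 (Set.mem_Ici.2 (sq_nonneg (x + y)))
    (Set.mem_Ici.2 (sq_nonneg (x - y))) (by norm_num : (0 : ℝ) ≤ 1 / 2)
    (by norm_num : (0 : ℝ) ≤ 1 / 2) (by norm_num)
  have hparallelogram : (1 / 2 : ℝ) • (x + y) ^ 2 + (1 / 2 : ℝ) • (x - y) ^ 2 = x ^ 2 + y ^ 2 := by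
    simp only [smul_eq_mul]; ring
  rw [hparallelogram, smul_eq_mul, smul_eq_mul] at hconcave
  have hsubadd := Real.rpow_add_le_add_rpow (sq_nonneg x) (sq_nonneg y) hq₀ hq₁
  simp only [Real.abs_rpow_eq_sq_rpow_half _ p]
  linarith

section Symmetrization

variable {Ω : Type*} [MeasurableSpace Ω] {P : Measure Ω} {X : Ω → ℝ}

lemma two_mul_integral_comp_le_of_identDistrib_neg
    (hX : IdentDistrib X (fun ω ↦ -X ω) P P) {φ ψ : ℝ → ℝ} (hφ : Measurable φ)
    (hφ₀ : ∀ x, 0 ≤ φ x) (hle : ∀ x, φ x + φ (-x) ≤ ψ x)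
    (hψ : Integrable (fun ω ↦ ψ (X ω)) P) :
    2 * ∫ ω, φ (X ω) ∂P ≤ ∫ ω, ψ (X ω) ∂P := by
  have hφX : IdentDistrib (fun ω ↦ φ (X ω)) (fun ω ↦ φ (-X ω)) P P := hX.comp hφ
  have hint : Integrable (fun ω ↦ φ (X ω)) P := by
    refine hψ.mono' (hφ.comp_aemeasurable hX.aemeasurable_fst).aestronglyMeasurable
      (ae_of_all _ fun ω ↦ ?_)
    rw [Real.norm_of_nonneg (hφ₀ _)]
    linarith [hle (X ω), hφ₀ (-X ω)]
  calc 2 * ∫ ω, φ (X ω) ∂P = ∫ ω, φ (X ω) ∂P + ∫ ω, φ (-X ω) ∂P := by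
        rw [← hφX.integral_eq]; ring
    _ = ∫ ω, φ (X ω) + φ (-X ω) ∂P := (integral_add hint (hφX.integrable_snd hint)).symm
    _ ≤ ∫ ω, ψ (X ω) ∂P :=
        integral_mono (hint.add (hφX.integrable_snd hint)) hψ fun ω ↦ hle (X ω)

end Symmetrization

/-- If `ε` is a symmetric real random variable and `r ∈ (1,2]` with `E|ε|^r < ∞`, then
for all `a, b ≥ 0`: `E|a + bε|^r ≤ a^r + b^r E|ε|^r`. -/
theorem moment_bound_symmetric {Ω : Type*} [MeasurableSpace Ω]
    (P : Measure Ω) [IsProbabilityMeasure P]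
    (ε : Ω → ℝ) (hε : Measurable ε)
    (hsym : P.map ε = P.map (fun ω => -ε ω))
    (r : ℝ) (hr : r ∈ Set.Ioc (1 : ℝ) 2)
    (hint : Integrable (fun ω => |ε ω| ^ r) P)
    (a b : ℝ) (ha : 0 ≤ a) (hb : 0 ≤ b) :
    ∫ ω, |a + b * ε ω| ^ r ∂P ≤ a ^ r + b ^ r * ∫ ω, |ε ω| ^ r ∂P := by
  obtain ⟨hr₁, hr₂⟩ := hr
  have hε_symm : IdentDistrib ε (fun ω ↦ -ε ω) P P := ⟨hε.aemeasurable, hε.neg.aemeasurable, hsym⟩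
  have hpointwise (x : ℝ) :
      |a + b * x| ^ r + |a + b * -x| ^ r ≤ 2 * (a ^ r + b ^ r * |x| ^ r) := by
    have h := Real.abs_add_rpow_add_abs_sub_rpow_le (by linarith) hr₂ a (b * x)
    rwa [abs_of_nonneg ha, abs_mul, abs_of_nonneg hb, Real.mul_rpow hb (abs_nonneg x),
      sub_eq_add_neg, ← mul_neg] at h
  have hbound := two_mul_integral_comp_le_of_identDistrib_neg hε_symm (by fun_prop)
    (fun x ↦ by positivity) hpointwise (((integrable_const _).add (hint.const_mul _)).const_mul 2)
  rw [integral_const_mul, integral_add (integrable_const _) (hint.const_mul _), integral_const,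
    integral_const_mul] at hbound
  simp only [probReal_univ, smul_eq_mul, one_mul] at hbound
  linarith
end

section
/- Let ε be a real-valued random variable on a probability space with Eε = 0, Eε³ = 0 and Eε⁴ < ∞. Then for all real numbers a and b: E[(a + bε)^4] ≤ (1 + 3Eε²)·a^4 + (Eε⁴ + 3Eε²)·b^4. -/
open MeasureTheory

/-- If `Eε = 0`, `Eε³ = 0` and `Eε⁴ < ∞`, then for all reals `a, b`:
`E[(a + bε)⁴] ≤ (1 + 3Eε²)a⁴ + (Eε⁴ + 3Eε²)b⁴`. -/
theorem fourth_moment_bound {Ω : Type*} [MeasurableSpace Ω]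
    (P : Measure Ω) [IsProbabilityMeasure P]
    (ε : Ω → ℝ) (hε : Measurable ε)
    (h4 : Integrable (fun ω => ε ω ^ 4) P)
    (hmean : ∫ ω, ε ω ∂P = 0)
    (hthird : ∫ ω, ε ω ^ 3 ∂P = 0)
    (a b : ℝ) :
    ∫ ω, (a + b * ε ω) ^ 4 ∂P
      ≤ (1 + 3 * ∫ ω, ε ω ^ 2 ∂P) * a ^ 4
        + ((∫ ω, ε ω ^ 4 ∂P) + 3 * ∫ ω, ε ω ^ 2 ∂P) * b ^ 4 := by
  have hbound : Integrable (fun ω => 1 + ε ω ^ 4) P :=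
    (integrable_const 1).add h4
  have hk : ∀ k : ℕ, k ≤ 4 → Integrable (fun ω => ε ω ^ k) P := by
    intro k hkle
    refine hbound.mono ((hε.pow_const k).aestronglyMeasurable) ?_
    filter_upwards with ω
    have h1 : |ε ω ^ k| = |ε ω| ^ k := by rw [abs_pow]
    rw [Real.norm_eq_abs, Real.norm_eq_abs, h1]
    have h4n : (0:ℝ) ≤ ε ω ^ 4 := by positivity
    rcases le_or_gt (|ε ω|) 1 with h | h
    · have : |ε ω| ^ k ≤ 1 := pow_le_one₀ (abs_nonneg _) h
      calc |ε ω| ^ k ≤ 1 := this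
        _ ≤ |1 + ε ω ^ 4| := by rw [abs_of_nonneg (by linarith)]; linarith
    · have : |ε ω| ^ k ≤ |ε ω| ^ 4 := pow_le_pow_right₀ h.le hkle
      have h44 : |ε ω| ^ 4 = ε ω ^ 4 := by rw [← abs_pow, abs_of_nonneg h4n]
      calc |ε ω| ^ k ≤ |ε ω| ^ 4 := this
        _ = ε ω ^ 4 := h44
        _ ≤ |1 + ε ω ^ 4| := by rw [abs_of_nonneg (by linarith)]; linarith
  have h1 := hk 1 (by norm_num)
  have h2 := hk 2 (by norm_num)
  have h3 := hk 3 (by norm_num)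
  simp only [pow_one] at h1
  have key : ∫ ω, (a + b * ε ω) ^ 4 ∂P
      = a ^ 4 + 6 * a ^ 2 * b ^ 2 * (∫ ω, ε ω ^ 2 ∂P)
        + b ^ 4 * (∫ ω, ε ω ^ 4 ∂P) := by
    have expand : (fun ω => (a + b * ε ω) ^ 4)
        = fun ω => a ^ 4 + (4 * a ^ 3 * b) * ε ω + (6 * a ^ 2 * b ^ 2) * ε ω ^ 2
            + (4 * a * b ^ 3) * ε ω ^ 3 + b ^ 4 * ε ω ^ 4 := by
      funext ω; ring
    rw [expand]
    have i0 : Integrable (fun _ : Ω => a ^ 4) P := integrable_const _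
    have i1 := h1.const_mul (4 * a ^ 3 * b)
    have i2 := h2.const_mul (6 * a ^ 2 * b ^ 2)
    have i3 := h3.const_mul (4 * a * b ^ 3)
    have i01 : Integrable (fun x => a ^ 4 + 4 * a ^ 3 * b * ε x) P := i0.add i1
    have i012 : Integrable (fun x => a ^ 4 + 4 * a ^ 3 * b * ε x
        + 6 * a ^ 2 * b ^ 2 * ε x ^ 2) P := i01.add i2
    have i0123 : Integrable (fun x => a ^ 4 + 4 * a ^ 3 * b * ε x
        + 6 * a ^ 2 * b ^ 2 * ε x ^ 2 + 4 * a * b ^ 3 * ε x ^ 3) P := i012.add i3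
    rw [integral_add i0123 (h4.const_mul _),
        integral_add i012 i3,
        integral_add i01 i2,
        integral_add i0 i1]
    rw [integral_const_mul, integral_const_mul, integral_const_mul,
        integral_const_mul, hmean, hthird, integral_const]
    simp
  rw [key]
  have hm2 : 0 ≤ ∫ ω, ε ω ^ 2 ∂P := integral_nonneg fun ω => sq_nonneg _
  have hab : 2 * (a ^ 2 * b ^ 2) ≤ a ^ 4 + b ^ 4 := by
    nlinarith [sq_nonneg (a ^ 2 - b ^ 2)]
  nlinarith [mul_le_mul_of_nonneg_left hab hm2]
end

section
/- Let a ≤ a' ≤ b ≤ b' be real numbers, let R be a buffered regime indicator for (y, d, a, b) and R' a buffered regime indicator for (y, d, a', b'). Then for every t ≥ d: R'_t − R_t = (R'_{t−1} − R_{t−1})·1(a < y_{t−d} ≤ b) + (1 − R'_{t−1})·1(a < y_{t−d} ≤ a') + R'_{t−1}·1(b < y_{t−d} ≤ b'), where 1(·) denotes the indicator of the stated condition. -/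
/-- `R` is a buffered regime indicator for data `y`, delay `d` and thresholds `rL ≤ rU`:
`R` is `{0,1}`-valued and, for `t ≥ d`, `R t = 1` if `y (t-d) ≤ rL`, `R t = 0` if
`y (t-d) > rU`, and `R t = R (t-1)` otherwise. -/
def IsBufferedIndicator (y : ℕ → ℝ) (d : ℕ) (rL rU : ℝ) (R : ℕ → ℝ) : Prop :=
  (∀ t, R t = 0 ∨ R t = 1) ∧
  ∀ t, d ≤ t →
    R t = if y (t - d) ≤ rL then 1 else if rU < y (t - d) then 0 else R (t - 1)

/-- One-step comparison identity between two buffered regime indicators with ordered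
thresholds `a ≤ a' ≤ b ≤ b'`. -/
theorem buffered_indicator_one_step (y : ℕ → ℝ) (d : ℕ) (hd : 1 ≤ d)
    (a a' b b' : ℝ) (h1 : a ≤ a') (h2 : a' ≤ b) (h3 : b ≤ b')
    (R R' : ℕ → ℝ)
    (hR : IsBufferedIndicator y d a b R)
    (hR' : IsBufferedIndicator y d a' b' R')
    (t : ℕ) (ht : d ≤ t) :
    R' t - R t =
      (R' (t - 1) - R (t - 1)) * (if a < y (t - d) ∧ y (t - d) ≤ b then 1 else 0)
      + (1 - R' (t - 1)) * (if a < y (t - d) ∧ y (t - d) ≤ a' then 1 else 0)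
      + R' (t - 1) * (if b < y (t - d) ∧ y (t - d) ≤ b' then 1 else 0) := by
  have hRt := hR.2 t ht
  have hRt' := hR'.2 t ht
  set x := y (t - d)
  rcases le_or_gt x a with c1 | c1
  · rw [hRt, hRt', if_pos c1, if_pos (show x ≤ a' by linarith),
      if_neg (show ¬(a < x ∧ x ≤ b) by rintro ⟨h, _⟩; linarith),
      if_neg (show ¬(a < x ∧ x ≤ a') by rintro ⟨h, _⟩; linarith),
      if_neg (show ¬(b < x ∧ x ≤ b') by rintro ⟨h, _⟩; linarith)]
    ring
  rcases le_or_gt x a' with c2 | c2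
  · rw [hRt, hRt', if_neg (show ¬ x ≤ a by linarith), if_neg (show ¬ b < x by linarith),
      if_pos c2,
      if_pos (show a < x ∧ x ≤ b from ⟨c1, by linarith⟩),
      if_pos (show a < x ∧ x ≤ a' from ⟨c1, c2⟩),
      if_neg (show ¬(b < x ∧ x ≤ b') by rintro ⟨h, _⟩; linarith)]
    ring
  rcases le_or_gt x b with c3 | c3
  · rw [hRt, hRt', if_neg (show ¬ x ≤ a by linarith), if_neg (show ¬ b < x by linarith),
      if_neg (show ¬ x ≤ a' by linarith), if_neg (show ¬ b' < x by linarith),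
      if_pos (show a < x ∧ x ≤ b from ⟨by linarith, c3⟩),
      if_neg (show ¬(a < x ∧ x ≤ a') by rintro ⟨_, h⟩; linarith),
      if_neg (show ¬(b < x ∧ x ≤ b') by rintro ⟨h, _⟩; linarith)]
    ring
  rcases le_or_gt x b' with c4 | c4
  · rw [hRt, hRt', if_neg (show ¬ x ≤ a by linarith), if_pos c3,
      if_neg (show ¬ x ≤ a' by linarith), if_neg (show ¬ b' < x by linarith),
      if_neg (show ¬(a < x ∧ x ≤ b) by rintro ⟨_, h⟩; linarith),
      if_neg (show ¬(a < x ∧ x ≤ a') by rintro ⟨_, h⟩; linarith),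
      if_pos (show b < x ∧ x ≤ b' from ⟨c3, c4⟩)]
    ring
  · rw [hRt, hRt', if_neg (show ¬ x ≤ a by linarith), if_pos c3,
      if_neg (show ¬ x ≤ a' by linarith), if_pos (show b' < x by linarith),
      if_neg (show ¬(a < x ∧ x ≤ b) by rintro ⟨_, h⟩; linarith),
      if_neg (show ¬(a < x ∧ x ≤ a') by rintro ⟨_, h⟩; linarith),
      if_neg (show ¬(b < x ∧ x ≤ b') by rintro ⟨_, h⟩; linarith)]
    ring
end

section
/- Let a ≤ a' ≤ b ≤ b' be real numbers, let R be a buffered regime indicator for (y, d, a, b) and R' a buffered regime indicator for (y, d, a', b'), and assume R_{d−1} = R'_{d−1}. Then for every t ≥ d: R'_t − R_t = Σ_{j=0}^{t−d} H_{t,j}·[ (1 − R'_{t−1−j})·1(a < y_{t−d−j} ≤ a') + R'_{t−1−j}·1(b < y_{t−d−j} ≤ b') ], where H_{t,0} = 1 and H_{t,j} = Π_{l=1}^{j} 1(a < y_{t−d+1−l} ≤ b) for j ≥ 1, and 1(·) denotes the indicator of the stated condition. -/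
open Finset

theorem unroll_first_order_recurrence {M : Type*} [CommSemiring M] {D g h : ℕ → M} {s t : ℕ}
    (hrec : ∀ k, s < k → k ≤ t → D k = g k + h k * D (k - 1)) (n : ℕ) (hn : n ≤ t - s) :
    D t = ∑ j ∈ range n, (∏ l ∈ Icc 1 j, h (t + 1 - l)) * g (t - j)
      + (∏ l ∈ Icc 1 n, h (t + 1 - l)) * D (t - n) := by
  induction n with
  | zero => simp
  | succ n ih =>
    have hstep : D (t - n) = g (t - n) + h (t - n) * D (t - (n + 1)) :=
      hrec (t - n) (by omega) (by omega)
    rw [ih (by omega), hstep, sum_range_succ, prod_Icc_succ_top (by omega),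
      show t + 1 - (n + 1) = t - n by omega]
    ring

theorem IsBufferedIndicator.sub_eq_add_mul_sub {y : ℕ → ℝ} {d : ℕ} {a a' b b' : ℝ}
    (h1 : a ≤ a') (h2 : a' ≤ b) (h3 : b ≤ b') {R R' : ℕ → ℝ}
    (hR : IsBufferedIndicator y d a b R) (hR' : IsBufferedIndicator y d a' b' R')
    {t : ℕ} (ht : d ≤ t) :
    R' t - R t =
      ((1 - R' (t - 1)) * (if a < y (t - d) ∧ y (t - d) ≤ a' then 1 else 0)
        + R' (t - 1) * (if b < y (t - d) ∧ y (t - d) ≤ b' then 1 else 0))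
      + (if a < y (t - d) ∧ y (t - d) ≤ b then 1 else 0) * (R' (t - 1) - R (t - 1)) := by
  rw [hR.2 t ht, hR'.2 t ht]
  simp only [ite_and]
  split_ifs <;> linarith

/-- Expansion of the difference of two buffered regime indicators (with ordered
thresholds `a ≤ a' ≤ b ≤ b'` and common initialization at time `d-1`) as a sum over
buffer-zone sojourns, with `H_{t,j} = ∏_{l=1}^j 1(a < y_{t-d+1-l} ≤ b)`. -/
theorem buffered_indicator_expansion (y : ℕ → ℝ) (d : ℕ) (hd : 1 ≤ d)
    (a a' b b' : ℝ) (h1 : a ≤ a') (h2 : a' ≤ b) (h3 : b ≤ b')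
    (R R' : ℕ → ℝ)
    (hR : IsBufferedIndicator y d a b R)
    (hR' : IsBufferedIndicator y d a' b' R')
    (hinit : R (d - 1) = R' (d - 1))
    (t : ℕ) (ht : d ≤ t) :
    R' t - R t =
      ∑ j ∈ Finset.range (t - d + 1),
        (∏ l ∈ Finset.Icc 1 j,
            (if a < y (t - d + 1 - l) ∧ y (t - d + 1 - l) ≤ b then (1 : ℝ) else 0))
          * ((1 - R' (t - 1 - j)) * (if a < y (t - d - j) ∧ y (t - d - j) ≤ a' then 1 else 0)
            + R' (t - 1 - j) * (if b < y (t - d - j) ∧ y (t - d - j) ≤ b' then 1 else 0)) := by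
  have hunroll := unroll_first_order_recurrence (D := fun k => R' k - R k) (s := d - 1) (t := t)
    (fun k hk _ => hR.sub_eq_add_mul_sub h1 h2 h3 hR' (by omega)) (t - (d - 1)) le_rfl
  rw [hunroll, Nat.sub_sub_self (by omega), hinit, sub_self, mul_zero, add_zero,
    show t - (d - 1) = t - d + 1 by omega]
  refine sum_congr rfl fun j _ => ?_
  rw [show t - j - 1 = t - 1 - j by omega, show t - j - d = t - d - j by omega]
  congr 1
  exact prod_congr rfl fun l _ => by rw [show t + 1 - l - d = t - d + 1 - l by omega]
end

section
/- Let a ≤ a' and b ≤ b' be real numbers with a ≤ b and a' ≤ b', let R be a buffered regime indicator for (y, d, a, b) and R' a buffered regime indicator for (y, d, a', b'), and assume R_{d−1} ≤ R'_{d−1}. Then R_t ≤ R'_t for every t ≥ d. -/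
/-- Monotonicity of the buffered regime indicator in the thresholds: if `a ≤ a'`,
`b ≤ b'` and the initializations are ordered, then `R t ≤ R' t` for all `t ≥ d`. -/
theorem buffered_indicator_monotone (y : ℕ → ℝ) (d : ℕ) (hd : 1 ≤ d)
    (a a' b b' : ℝ) (haa : a ≤ a') (hbb : b ≤ b') (hab : a ≤ b) (hab' : a' ≤ b')
    (R R' : ℕ → ℝ)
    (hR : IsBufferedIndicator y d a b R)
    (hR' : IsBufferedIndicator y d a' b' R')
    (hinit : R (d - 1) ≤ R' (d - 1)) :
    ∀ t, d ≤ t → R t ≤ R' t := by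
  obtain ⟨hR01, hRrec⟩ := hR
  obtain ⟨hR'01, hR'rec⟩ := hR'
  have key : ∀ t, d - 1 ≤ t → R t ≤ R' t := by
    intro t ht
    induction t, ht using Nat.le_induction with
    | base => exact hinit
    | succ t ht ih =>
      have hdt : d ≤ t + 1 := by omega
      rw [hRrec (t + 1) hdt, hR'rec (t + 1) hdt]
      simp only [Nat.add_sub_cancel]
      set z := y (t + 1 - d) with hz
      by_cases h1 : z ≤ a
      · rw [if_pos h1, if_pos (h1.trans haa)]
      · rw [if_neg h1]
        by_cases h2 : z ≤ a'
        · rw [if_pos h2]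
          split
          · norm_num
          · rcases hR01 t with h | h <;> rw [h] <;> norm_num
        · rw [if_neg h2]
          by_cases h3 : b' < z
          · rw [if_pos h3, if_pos (lt_of_le_of_lt hbb h3)]
          · rw [if_neg h3]
            by_cases h4 : b < z
            · rw [if_pos h4]
              rcases hR'01 t with h | h <;> rw [h] <;> norm_num
            · rw [if_neg h4]; exact ih
  intro t ht
  exact key t (by omega)
end

section
/- Let R and R' both be buffered regime indicators for the same data (y, d, r_L, r_U) (possibly with different values before time d). If t ≥ d and there exists an index s with d ≤ s ≤ t such that y_{s−d} ∉ (r_L, r_U], then R_t = R'_t. -/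
/-- Once the threshold variable has left the buffer zone, the buffered regime indicator
no longer depends on its initialization: if `R` and `R'` are buffered regime indicators
for the same `(y, d, rL, rU)` and some `s ∈ [d, t]` has `y (s-d) ∉ (rL, rU]`, then
`R t = R' t`. -/
theorem buffered_indicator_init_free (y : ℕ → ℝ) (d : ℕ) (hd : 1 ≤ d)
    (rL rU : ℝ) (hr : rL ≤ rU)
    (R R' : ℕ → ℝ)
    (hR : IsBufferedIndicator y d rL rU R)
    (hR' : IsBufferedIndicator y d rL rU R')
    (t : ℕ) (ht : d ≤ t)
    (hexit : ∃ s, d ≤ s ∧ s ≤ t ∧ y (s - d) ∉ Set.Ioc rL rU) :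
    R t = R' t := by
  induction t using Nat.strong_induction_on with
  | _ t ih =>
    obtain ⟨s, hds, hst, hs⟩ := hexit
    have hRt := hR.2 t ht
    have hR't := hR'.2 t ht
    by_cases h1 : y (t - d) ≤ rL
    · rw [hRt, hR't, if_pos h1, if_pos h1]
    · by_cases h2 : rU < y (t - d)
      · rw [hRt, hR't, if_neg h1, if_neg h1, if_pos h2, if_pos h2]
      · -- buffer zone at t, so s < t
        have hst' : s < t := by
          rcases lt_or_eq_of_le hst with h | h
          · exact h
          · exfalso; subst h
            exact hs ⟨lt_of_not_ge h1, le_of_not_gt h2⟩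
        have h1t : 1 ≤ t := le_trans hd ht
        have hdt1 : d ≤ t - 1 := by omega
        rw [hRt, hR't, if_neg h1, if_neg h1, if_neg h2, if_neg h2]
        exact ih (t - 1) (by omega) hdt1 ⟨s, hds, by omega, hs⟩
end
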